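/- Let μ be a Radon measure on ℝⁿ with support Σ, let 0 ≤ d ≤ n, x ∈ Σ, r > 0, and let V ∈ A'(d,n) with W = x + rV. Then for every y ∈ W ∩ B(x, r/2), dist(y, Σ) ≤ 8 · W₁(μ_{x,r}, ν_V)^{1/(d+1)} · r. -/

import Mathlib

/-!
Suppose `D := dist(y, Σ) > 8 ε^(1/(d+1)) r` where `ε := W₁(μ_{x,r}, ν_V)`, and put `δ := D / (8r)`.
The ball `B(y, D/2)` misses `Σ`, hence is `μ`-null, so the tent of height `4δ` around
`v := (y - x)/r ∈ V` integrates to `0` against `μ_{x,r}`. On the other hand `ℋ^d` on a `d`-plane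
scales like `ρ^d` on balls centred in the plane, and `V` meets `B(0, 1/2)`, so
`ν_V(B(v, 2δ)) ≥ δ^d` and the tent integrates to at least `2δ^(d+1)` against `ν_V`.
Testing `W₁` against the tent gives `ε ≥ 2δ^(d+1) > ε`.
-/

open MeasureTheory Metric Set
open scoped ENNReal NNReal

/-- The restricted `L¹`-Wasserstein distance. -/
noncomputable def W1 {n : ℕ} (μ ν : Measure (EuclideanSpace ℝ (Fin n))) : ℝ :=
  sSup {a : ℝ | ∃ ψ : EuclideanSpace ℝ (Fin n) → ℝ,
    LipschitzWith 1 ψ ∧ (∀ x ∉ ball (0 : EuclideanSpace ℝ (Fin n)) 1, ψ x = 0) ∧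
    a = |(∫ x, ψ x ∂μ) - ∫ x, ψ x ∂ν|}

/-- The rescaled normalized measure `μ_{x,r}(A) = μ(x + rA) / μ(B(x,r))`. -/
noncomputable def blowup {n : ℕ} (μ : Measure (EuclideanSpace ℝ (Fin n)))
    (x : EuclideanSpace ℝ (Fin n)) (r : ℝ) : Measure (EuclideanSpace ℝ (Fin n)) :=
  (μ (ball x r))⁻¹ • μ.map (fun y => r⁻¹ • (y - x))

/-- The normalized restriction of `ℋ^d` to a `d`-plane `V`:
`ν_V = ℋ^d(V ∩ B(0,1))⁻¹ · ℋ^d|_V`. -/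
noncomputable def nuV {n : ℕ} (d : ℝ) (V : Set (EuclideanSpace ℝ (Fin n))) :
    Measure (EuclideanSpace ℝ (Fin n)) :=
  (μH[d] (V ∩ ball 0 1))⁻¹ • (μH[d]).restrict V

open Module
open scoped Pointwise

section Support

variable {X : Type*} [PseudoMetricSpace X] [MeasurableSpace X]

lemma setOf_forall_measure_ball_pos_eq_support (μ : Measure X) :
    {x | ∀ ρ > 0, 0 < μ (ball x ρ)} = μ.support := by
  ext x
  exact (nhds_basis_ball.mem_measureSupport).symm

lemma measure_ball_eq_zero_of_le_infDist_support [HereditarilyLindelofSpace X] {μ : Measure X}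
    {y : X} {ρ : ℝ} (h : ρ ≤ infDist y μ.support) : μ (ball y ρ) = 0 := by
  refine measure_mono_null (t := μ.supportᶜ) (fun z hz hzμ => ?_) Measure.measure_compl_support
  have := infDist_le_dist_of_mem (x := y) hzμ
  rw [mem_ball, dist_comm] at hz
  linarith

end Support

section Tent

variable {X : Type*} [PseudoMetricSpace X]

def tent (c : X) (ρ : ℝ) (z : X) : ℝ := max 0 (ρ - dist z c)

lemma tent_nonneg (c : X) (ρ : ℝ) (z : X) : 0 ≤ tent c ρ z := le_max_left _ _

lemma tent_le {c : X} {ρ : ℝ} (hρ : 0 ≤ ρ) (z : X) : tent c ρ z ≤ ρ :=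
  max_le hρ (sub_le_self _ dist_nonneg)

lemma tent_eq_zero {c z : X} {ρ : ℝ} (hz : z ∉ ball c ρ) : tent c ρ z = 0 :=
  max_eq_left (sub_nonpos.mpr (not_lt.mp hz))

lemma half_le_tent {c z : X} {ρ : ℝ} (hz : z ∈ ball c (ρ / 2)) : ρ / 2 ≤ tent c ρ z := by
  rw [mem_ball] at hz
  exact le_max_of_le_right (by linarith)

lemma lipschitzWith_one_tent (c : X) (ρ : ℝ) : LipschitzWith 1 (tent c ρ) := by
  show LipschitzWith 1 fun z => max 0 (ρ - dist z c)
  simpa using ((LipschitzWith.const ρ).sub (LipschitzWith.dist_left c)).const_max 0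

variable [MeasurableSpace X] [OpensMeasurableSpace X]

lemma integrable_tent {ν : Measure X} {c : X} {ρ : ℝ} (hρ : 0 ≤ ρ) (hν : ν (ball c ρ) ≠ ∞) :
    Integrable (tent c ρ) ν := by
  refine IntegrableOn.integrable_of_forall_notMem_eq_zero ?_ fun z hz => tent_eq_zero hz
  refine Measure.integrableOn_of_bounded hν
    (lipschitzWith_one_tent c ρ).continuous.aestronglyMeasurable (M := ρ) (ae_of_all _ fun z => ?_)
  rw [Real.norm_of_nonneg (tent_nonneg c ρ z)]
  exact tent_le hρ z

lemma mul_measureReal_le_integral_tent {ν : Measure X} {c : X} {ρ : ℝ} (hρ : 0 ≤ ρ)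
    (hν : ν (ball c ρ) ≠ ∞) : ρ / 2 * ν.real (ball c (ρ / 2)) ≤ ∫ z, tent c ρ z ∂ν := by
  have hν' : ν (ball c (ρ / 2)) ≠ ∞ :=
    measure_ne_top_of_subset (ball_subset_ball (by linarith)) hν
  calc ρ / 2 * ν.real (ball c (ρ / 2))
      ≤ ∫ z in ball c (ρ / 2), tent c ρ z ∂ν := by
        rw [mul_comm, ← smul_eq_mul]
        exact setIntegral_ge_of_const_le measurableSet_ball hν' (fun z hz => half_le_tent hz)
          (integrable_tent hρ hν).integrableOn
    _ ≤ ∫ z, tent c ρ z ∂ν :=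
        setIntegral_le_integral (integrable_tent hρ hν) (ae_of_all _ (tent_nonneg c ρ))

end Tent

section HausdorffAffine

variable {E : Type*} [NormedAddCommGroup E] [NormedSpace ℝ E]

lemma AffineSubspace.inter_ball_eq_image (V : AffineSubspace ℝ E) {q : E} (hq : q ∈ V)
    {ρ : ℝ} (hρ : 0 < ρ) :
    (V : Set E) ∩ ball q ρ = (q + ·) '' (ρ • ((V.direction : Set E) ∩ ball 0 1)) := by
  ext z
  simp only [mem_inter_iff, mem_image, mem_smul_set, SetLike.mem_coe, mem_ball, dist_eq_norm,
    sub_zero]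
  constructor
  · rintro ⟨hzV, hz⟩
    refine ⟨z - q, ⟨ρ⁻¹ • (z - q), ⟨?_, ?_⟩, ?_⟩, by abel⟩
    · exact V.direction.smul_mem _ (AffineSubspace.vsub_mem_direction hzV hq)
    · rwa [norm_smul, Real.norm_eq_abs, abs_inv, abs_of_pos hρ, inv_mul_lt_one₀ hρ]
    · exact smul_inv_smul₀ hρ.ne' _
  · rintro ⟨_, ⟨w, ⟨hwV, hw⟩, rfl⟩, rfl⟩
    refine ⟨?_, ?_⟩
    · simpa [vadd_eq_add, add_comm] using
        AffineSubspace.vadd_mem_of_mem_direction (V.direction.smul_mem ρ hwV) hq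
    · rw [add_sub_cancel_left, norm_smul, Real.norm_eq_abs, abs_of_pos hρ]
      exact mul_lt_of_lt_one_right hρ hw

variable [MeasurableSpace E] [BorelSpace E]

lemma AffineSubspace.hausdorffMeasure_inter_ball (V : AffineSubspace ℝ E) {q : E} (hq : q ∈ V)
    {ρ : ℝ} (hρ : 0 < ρ) {d : ℝ} (hd : 0 ≤ d) :
    μH[d] ((V : Set E) ∩ ball q ρ)
      = ENNReal.ofReal ρ ^ d * μH[d] ((V.direction : Set E) ∩ ball 0 1) := by
  rw [V.inter_ball_eq_image hq hρ, (isometry_add_left q).hausdorffMeasure_image (.inl hd),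
    Measure.hausdorffMeasure_smul₀ hd hρ.ne', ENNReal.smul_def, smul_eq_mul,
    ENNReal.coe_rpow_of_nonneg _ hd, Real.nnnorm_of_nonneg hρ.le, ENNReal.ofReal,
    Real.toNNReal_of_nonneg hρ.le]

lemma Submodule.hausdorffMeasure_inter_ball_pos (K : Submodule ℝ E) [FiniteDimensional ℝ K] :
    0 < μH[finrank ℝ K] ((K : Set E) ∩ ball 0 1) ∧
      μH[finrank ℝ K] ((K : Set E) ∩ ball 0 1) < ∞ := by
  have himg : (K : Set E) ∩ ball 0 1 = ((↑) : K → E) '' ball 0 1 := by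
    ext z
    simp only [mem_inter_iff, mem_image, SetLike.mem_coe, mem_ball_zero_iff]
    constructor
    · rintro ⟨hz, h⟩
      exact ⟨⟨z, hz⟩, h, rfl⟩
    · rintro ⟨w, hw, rfl⟩
      exact ⟨w.2, hw⟩
  rw [himg, isometry_subtype_coe.hausdorffMeasure_image (.inl (Nat.cast_nonneg _))]
  exact ⟨measure_ball_pos _ _ one_pos, measure_ball_lt_top⟩

/-- Squeezing `ball 0 1` between `ball p (1/2)` and `ball p 2`. -/
lemma AffineSubspace.hausdorffMeasure_inter_ball_zero_one_mem_Icc (V : AffineSubspace ℝ E)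
    {p : E} (hp : p ∈ (V : Set E) ∩ ball 0 (1 / 2)) {d : ℝ} (hd : 0 ≤ d) :
    μH[d] ((V : Set E) ∩ ball 0 1) ∈ Icc
      (ENNReal.ofReal (1 / 2) ^ d * μH[d] ((V.direction : Set E) ∩ ball 0 1))
      (ENNReal.ofReal 2 ^ d * μH[d] ((V.direction : Set E) ∩ ball 0 1)) := by
  have hp' : ‖p‖ < 1 / 2 := mem_ball_zero_iff.mp hp.2
  rw [← V.hausdorffMeasure_inter_ball hp.1 (by norm_num) hd,
    ← V.hausdorffMeasure_inter_ball hp.1 (by norm_num) hd]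
  refine ⟨measure_mono (inter_subset_inter_right _ fun z hz => ?_),
    measure_mono (inter_subset_inter_right _ fun z hz => ?_)⟩
  · rw [mem_ball_iff_norm] at hz
    rw [mem_ball_zero_iff]
    linarith [norm_le_norm_add_norm_sub' z p]
  · rw [mem_ball_zero_iff] at hz
    rw [mem_ball_iff_norm]
    linarith [norm_sub_le z p]

end HausdorffAffine

local notation "ℝ^" n => EuclideanSpace ℝ (Fin n)

section NormalizedPlaneMeasure

variable {n d : ℕ} {V : AffineSubspace ℝ (ℝ^n)}

lemma hausdorffMeasure_inter_ball_zero_one_ne_zero_ne_top (hVd : finrank ℝ V.direction = d)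
    (hV : ((V : Set (ℝ^n)) ∩ ball 0 (1 / 2)).Nonempty) :
    μH[(d : ℝ)] ((V : Set (ℝ^n)) ∩ ball 0 1) ≠ 0 ∧
      μH[(d : ℝ)] ((V : Set (ℝ^n)) ∩ ball 0 1) ≠ ∞ := by
  obtain ⟨p, hp⟩ := hV
  obtain ⟨hc0, hctop⟩ := hVd ▸ V.direction.hausdorffMeasure_inter_ball_pos
  obtain ⟨hlow, hup⟩ := V.hausdorffMeasure_inter_ball_zero_one_mem_Icc hp (Nat.cast_nonneg d)
  refine ⟨(lt_of_lt_of_le ?_ hlow).ne', (lt_of_le_of_lt hup ?_).ne⟩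
  · exact ENNReal.mul_pos (ENNReal.rpow_pos (by norm_num) ENNReal.ofReal_ne_top).ne' hc0.ne'
  · exact ENNReal.mul_lt_top (ENNReal.rpow_lt_top_of_nonneg (Nat.cast_nonneg d)
      ENNReal.ofReal_ne_top) hctop

lemma nuV_apply_ball {y : ℝ^n} (hy : y ∈ V) {ρ : ℝ} (hρ : 0 < ρ) :
    nuV d (V : Set (ℝ^n)) (ball y ρ) = (μH[(d : ℝ)] ((V : Set (ℝ^n)) ∩ ball 0 1))⁻¹ *
      (ENNReal.ofReal ρ ^ (d : ℝ) * μH[(d : ℝ)] ((V.direction : Set (ℝ^n)) ∩ ball 0 1)) := by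
  rw [nuV, Measure.smul_apply, Measure.restrict_apply measurableSet_ball, inter_comm (ball y ρ),
    V.hausdorffMeasure_inter_ball hy hρ (Nat.cast_nonneg d), smul_eq_mul]

lemma nuV_ball_zero_one (hVd : finrank ℝ V.direction = d)
    (hV : ((V : Set (ℝ^n)) ∩ ball 0 (1 / 2)).Nonempty) : nuV d (V : Set (ℝ^n)) (ball 0 1) = 1 := by
  obtain ⟨h0, htop⟩ := hausdorffMeasure_inter_ball_zero_one_ne_zero_ne_top hVd hV
  rw [nuV, Measure.smul_apply, Measure.restrict_apply measurableSet_ball, inter_comm (ball 0 1),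
    smul_eq_mul, ENNReal.inv_mul_cancel h0 htop]

lemma half_pow_le_nuV_ball (hVd : finrank ℝ V.direction = d)
    (hV : ((V : Set (ℝ^n)) ∩ ball 0 (1 / 2)).Nonempty) {y : ℝ^n} (hy : y ∈ V) {ρ : ℝ}
    (hρ : 0 < ρ) (hball : ball y ρ ⊆ ball 0 1) :
    (ρ / 2) ^ d ≤ (nuV d (V : Set (ℝ^n))).real (ball y ρ) := by
  obtain ⟨p, hp⟩ := hV
  obtain ⟨hc0, hctop⟩ := hVd ▸ V.direction.hausdorffMeasure_inter_ball_pos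
  have hup := (V.hausdorffMeasure_inter_ball_zero_one_mem_Icc hp (Nat.cast_nonneg d)).2
  have hfin : nuV d (V : Set (ℝ^n)) (ball y ρ) ≠ ∞ :=
    measure_ne_top_of_subset hball (by rw [nuV_ball_zero_one hVd ⟨p, hp⟩]; exact ENNReal.one_ne_top)
  rw [measureReal_def, ← ENNReal.ofReal_le_iff_le_toReal hfin, nuV_apply_ball hy hρ,
    ENNReal.ofReal_pow (by positivity), ← ENNReal.rpow_natCast,
    ENNReal.ofReal_div_of_pos two_pos, ENNReal.div_rpow_of_nonneg _ _ (Nat.cast_nonneg d),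
    ← ENNReal.mul_div_mul_right _ _ hc0.ne' hctop.ne, ENNReal.div_eq_inv_mul]
  gcongr

end NormalizedPlaneMeasure

section Blowup

variable {n : ℕ} {μ : Measure (ℝ^n)} {x : ℝ^n} {r : ℝ}

lemma preimage_ball_rescale (hr : 0 < r) (c : ℝ^n) (ρ : ℝ) :
    (fun z : ℝ^n => r⁻¹ • (z - x)) ⁻¹' ball c ρ = ball (x + r • c) (r * ρ) := by
  ext z
  have hz : r⁻¹ • (z - x) - c = r⁻¹ • (z - (x + r • c)) := by
    rw [sub_add_eq_sub_sub, smul_sub r⁻¹ (z - x), inv_smul_smul₀ hr.ne']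
  simp only [mem_preimage, mem_ball, dist_eq_norm, hz, norm_smul, norm_inv,
    Real.norm_of_nonneg hr.le, inv_mul_lt_iff₀ hr]

lemma blowup_ball_zero_one (hr : 0 < r) (h0 : μ (ball x r) ≠ 0) (htop : μ (ball x r) ≠ ∞) :
    blowup μ x r (ball 0 1) = 1 := by
  have hT : Measurable fun z : ℝ^n => r⁻¹ • (z - x) := by fun_prop
  rw [blowup, Measure.smul_apply, Measure.map_apply hT measurableSet_ball,
    preimage_ball_rescale hr, smul_zero, add_zero, mul_one, smul_eq_mul,
    ENNReal.inv_mul_cancel h0 htop]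

lemma integral_blowup_eq_zero (hr : 0 < r) {ψ : (ℝ^n) → ℝ} {c : ℝ^n} {ρ : ℝ}
    (hψ : ∀ z ∉ ball c ρ, ψ z = 0) (hμ : μ (ball (x + r • c) (r * ρ)) = 0) :
    ∫ z, ψ z ∂blowup μ x r = 0 := by
  have hT : MeasurableEmbedding fun z : ℝ^n => r⁻¹ • (z - x) :=
    ((Homeomorph.subRight x).trans
      (Homeomorph.smulOfNeZero r⁻¹ (inv_ne_zero hr.ne'))).measurableEmbedding
  have hae : ∀ᵐ z ∂μ, ψ (r⁻¹ • (z - x)) = 0 := by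
    refine measure_mono_null (fun z hz => ?_) hμ
    rw [← preimage_ball_rescale hr]
    exact not_imp_comm.mp (hψ _) hz
  rw [blowup, integral_smul_measure, hT.integral_map, integral_eq_zero_of_ae hae, smul_zero]

end Blowup

section Wasserstein

variable {n : ℕ}

lemma W1_nonneg (μ ν : Measure (ℝ^n)) : 0 ≤ W1 μ ν :=
  Real.sSup_nonneg (by rintro _ ⟨ψ, -, -, rfl⟩; exact abs_nonneg _)

/-- Compare with a point at distance `2` outside the unit ball. -/
lemma abs_le_two_of_lipschitzWith_one {E : Type*} [NormedAddCommGroup E] [NormedSpace ℝ E]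
    [Nontrivial E] {ψ : E → ℝ} (hψ : LipschitzWith 1 ψ) (hψ0 : ∀ z ∉ ball 0 1, ψ z = 0) (z : E) :
    |ψ z| ≤ 2 := by
  by_cases hz : z ∈ ball 0 1
  · obtain ⟨u, hu⟩ := exists_norm_eq E zero_le_two
    have hout : z + u ∉ ball 0 1 := by
      have := norm_sub_le (z + u) z
      rw [add_sub_cancel_left] at this
      rw [mem_ball_zero_iff, not_lt]
      linarith [mem_ball_zero_iff.mp hz]
    simpa [hψ0 _ hout, dist_eq_norm, ← Real.dist_eq, hu] using hψ.dist_le_mul z (z + u)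
  · rw [hψ0 z hz, abs_zero]; norm_num

lemma abs_integral_le_of_lipschitzWith_one {E : Type*} [NormedAddCommGroup E] [NormedSpace ℝ E]
    [Nontrivial E] [MeasurableSpace E] {μ : Measure E} (hμ : μ (ball 0 1) ≠ ∞) {ψ : E → ℝ}
    (hψ : LipschitzWith 1 ψ) (hψ0 : ∀ z ∉ ball 0 1, ψ z = 0) :
    |∫ z, ψ z ∂μ| ≤ 2 * μ.real (ball 0 1) := by
  rw [← setIntegral_eq_integral_of_forall_compl_eq_zero hψ0, ← Real.norm_eq_abs]
  exact norm_setIntegral_le_of_norm_le_const hμ.lt_top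
    fun z _ => abs_le_two_of_lipschitzWith_one hψ hψ0 z

lemma abs_integral_sub_le_W1 [Nontrivial (ℝ^n)] {μ ν : Measure (ℝ^n)} (hμ : μ (ball 0 1) ≠ ∞)
    (hν : ν (ball 0 1) ≠ ∞) {ψ : (ℝ^n) → ℝ} (hψ : LipschitzWith 1 ψ)
    (hψ0 : ∀ z ∉ ball 0 1, ψ z = 0) : |(∫ z, ψ z ∂μ) - ∫ z, ψ z ∂ν| ≤ W1 μ ν := by
  refine le_csSup ⟨2 * μ.real (ball 0 1) + 2 * ν.real (ball 0 1), ?_⟩ ⟨ψ, hψ, hψ0, rfl⟩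
  rintro _ ⟨φ, hφ, hφ0, rfl⟩
  exact (abs_sub _ _).trans (add_le_add (abs_integral_le_of_lipschitzWith_one hμ hφ hφ0)
    (abs_integral_le_of_lipschitzWith_one hν hφ hφ0))

end Wasserstein

lemma two_mul_pow_succ_le_W1 {n d : ℕ} [Nontrivial (ℝ^n)] {μ : Measure (ℝ^n)}
    [IsLocallyFiniteMeasure μ] {x : ℝ^n} {r : ℝ} (hr : 0 < r) (hμx : μ (ball x r) ≠ 0)
    {V : AffineSubspace ℝ (ℝ^n)} (hVd : finrank ℝ V.direction = d)
    (hV : ((V : Set (ℝ^n)) ∩ ball 0 (1 / 2)).Nonempty) {v : ℝ^n} (hv : v ∈ V) {δ : ℝ}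
    (hδ : 0 < δ) (hvδ : ‖v‖ + 4 * δ ≤ 1) (hnull : μ (ball (x + r • v) (r * (4 * δ))) = 0) :
    2 * δ ^ (d + 1) ≤ W1 (blowup μ x r) (nuV d (V : Set (ℝ^n))) := by
  have hball : ball v (4 * δ) ⊆ ball 0 1 := fun z hz => by
    rw [mem_ball_iff_norm] at hz
    rw [mem_ball_zero_iff]
    linarith [norm_le_norm_add_norm_sub' z v]
  have hψ0 : ∀ z ∉ ball 0 1, tent v (4 * δ) z = 0 := fun z hz => tent_eq_zero (hz <| hball ·)
  have hν1 := nuV_ball_zero_one hVd hV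
  have hνfin : nuV d (V : Set (ℝ^n)) (ball v (4 * δ)) ≠ ∞ :=
    measure_ne_top_of_subset hball (by rw [hν1]; exact ENNReal.one_ne_top)
  have hμ1 := blowup_ball_zero_one hr hμx measure_ball_lt_top.ne
  have hW := abs_integral_sub_le_W1 (by rw [hμ1]; exact ENNReal.one_ne_top)
    (by rw [hν1]; exact ENNReal.one_ne_top) (lipschitzWith_one_tent v (4 * δ)) hψ0
  rw [integral_blowup_eq_zero hr (fun z hz => tent_eq_zero hz) hnull, zero_sub, abs_neg] at hW
  have hlow : 2 * δ * (nuV d (V : Set (ℝ^n))).real (ball v (2 * δ))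
      ≤ ∫ z, tent v (4 * δ) z ∂nuV d (V : Set (ℝ^n)) := by
    simpa [show 4 * δ / 2 = 2 * δ by ring] using
      mul_measureReal_le_integral_tent (by positivity) hνfin
  have hmass : δ ^ d ≤ (nuV d (V : Set (ℝ^n))).real (ball v (2 * δ)) := by
    simpa using half_pow_le_nuV_ball hVd hV hv (ρ := 2 * δ) (by positivity)
      ((ball_subset_ball (by linarith)).trans hball)
  calc 2 * δ ^ (d + 1) ≤ 2 * δ * (nuV d (V : Set (ℝ^n))).real (ball v (2 * δ)) := by
        rw [pow_succ]; nlinarith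
    _ ≤ W1 (blowup μ x r) (nuV d (V : Set (ℝ^n))) := hlow.trans ((le_abs_self _).trans hW)

theorem stmt_6_general {n : ℕ} (d : ℕ)
    (μ : Measure (EuclideanSpace ℝ (Fin n))) [IsLocallyFiniteMeasure μ]
    (S : Set (EuclideanSpace ℝ (Fin n)))
    (hS : S = {x | ∀ ρ > 0, 0 < μ (ball x ρ)})
    (x : EuclideanSpace ℝ (Fin n)) (hx : x ∈ S) (r : ℝ) (hr : 0 < r)
    (V : AffineSubspace ℝ (EuclideanSpace ℝ (Fin n)))
    (hVd : Module.finrank ℝ V.direction = d)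
    (hVmeet : ((V : Set (EuclideanSpace ℝ (Fin n))) ∩ ball 0 (1/2)).Nonempty) :
    ∀ y ∈ ((fun z => x + r • z) '' (V : Set (EuclideanSpace ℝ (Fin n)))) ∩ ball x (r / 2),
      infDist y S
        ≤ 8 * (W1 (blowup μ x r) (nuV (d : ℝ) (V : Set (EuclideanSpace ℝ (Fin n)))))
            ^ ((1 : ℝ) / (d + 1)) * r := by
  rintro _ ⟨⟨v, hv, rfl⟩, hy⟩
  dsimp only at hy ⊢
  set ε := W1 (blowup μ x r) (nuV (d : ℝ) (V : Set (EuclideanSpace ℝ (Fin n))))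
  have hε : 0 ≤ ε := W1_nonneg _ _
  rcases subsingleton_or_nontrivial (EuclideanSpace ℝ (Fin n)) with hE | hE
  · rw [Subsingleton.elim (x + r • v) x, infDist_zero_of_mem hx]
    positivity
  rw [setOf_forall_measure_ball_pos_eq_support] at hS
  subst hS
  have hμx : 0 < μ (ball x r) := nhds_basis_ball.mem_measureSupport.mp hx r hr
  set D := infDist (x + r • v) μ.support
  by_contra! hlt
  have hrv : r * ‖v‖ < r / 2 := by
    simpa [dist_eq_norm, norm_smul, abs_of_pos hr] using hy
  have hD : D < r / 2 := (infDist_le_dist_of_mem hx).trans_lt hy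
  set δ := D / (8 * r) with hδdef
  have hδ : ε ^ ((1 : ℝ) / (d + 1)) < δ := by
    rw [lt_div_iff₀ (by positivity)]; linarith
  have hδ0 : 0 < δ := (Real.rpow_nonneg hε _).trans_lt hδ
  have hrδ : r * (4 * δ) = D / 2 := by rw [hδdef]; field_simp; ring
  have hW := two_mul_pow_succ_le_W1 hr hμx.ne' hVd hVmeet hv hδ0
    (le_of_mul_le_mul_left (by rw [mul_add, hrδ]; linarith) hr)
    (measure_ball_eq_zero_of_le_infDist_support (show r * (4 * δ) ≤ D by
      linarith [infDist_nonneg (x := x + r • v) (s := μ.support)]))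
  rw [one_div, Real.rpow_inv_lt_iff_of_pos hε hδ0.le (by positivity)] at hδ
  norm_cast at hδ
  linarith [pow_pos hδ0 (d + 1)]

/-- For `x ∈ Σ`, `r > 0`, `V` a `d`-plane meeting `B(0,1/2)` and `W = x + rV`, every
`y ∈ W ∩ B(x, r/2)` satisfies `dist(y, Σ) ≤ 8 · W₁(μ_{x,r}, ν_V)^{1/(d+1)} · r`. -/
theorem stmt_6 {n : ℕ} (d : ℕ) (hd : d ≤ n)
    (μ : Measure (EuclideanSpace ℝ (Fin n))) [IsLocallyFiniteMeasure μ]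
    (S : Set (EuclideanSpace ℝ (Fin n)))
    (hS : S = {x | ∀ ρ > 0, 0 < μ (ball x ρ)})
    (x : EuclideanSpace ℝ (Fin n)) (hx : x ∈ S) (r : ℝ) (hr : 0 < r)
    (V : AffineSubspace ℝ (EuclideanSpace ℝ (Fin n)))
    (hVd : Module.finrank ℝ V.direction = d)
    (hVmeet : ((V : Set (EuclideanSpace ℝ (Fin n))) ∩ ball 0 (1/2)).Nonempty) :
    ∀ y ∈ ((fun z => x + r • z) '' (V : Set (EuclideanSpace ℝ (Fin n)))) ∩ ball x (r / 2),
      infDist y S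
        ≤ 8 * (W1 (blowup μ x r) (nuV (d : ℝ) (V : Set (EuclideanSpace ℝ (Fin n)))))
            ^ ((1 : ℝ) / (d + 1)) * r :=
  stmt_6_general d μ S hS x hx r hr V hVd hVmeet
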